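/- arXiv:2103.06213 — 8 statements merged into one kernel-verified Lean document; each statement's English description precedes it below -/
import Mathlib

section
/- The norm of the 2×2 complex matrix Φ with entries φ₀₀, φ₀₁, φ₁₀, φ₁₁ equals sqrt((φ + sqrt(φ² − 4|ω|²))/2), where φ = |φ₀₀|² + |φ₀₁|² + |φ₁₀|² + |φ₁₁|² and ω = φ₀₀φ₁₁ − φ₀₁φ₁₀. -/
/-!
`‖Φ v‖²` is the Hermitian form of the Gram matrix `Φᴴ Φ = !![a, b; conj b, c]`, whose trace is
`φ` and whose determinant `a c - ‖b‖²` is `‖ω‖²`. Its larger eigenvalue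
`μ = (φ + √(φ² - 4‖ω‖²)) / 2` satisfies `a, c ≤ μ` and `(μ - a) (μ - c) = ‖b‖²`. AM–GM on the
cross term then gives `‖Φ v‖² ≤ μ ‖v‖²`, with equality at the eigenvector `(μ - c, conj b)`, or at
`(0, 1)` when `μ = c`.
-/

open ComplexConjugate

theorem ContinuousLinearMap.opNorm_eq_sqrt_of_sq_bound_attained {𝕜 E F : Type*}
    [NontriviallyNormedField 𝕜] [NormedAddCommGroup E] [SeminormedAddCommGroup F]
    [NormedSpace 𝕜 E] [NormedSpace 𝕜 F] (T : E →L[𝕜] F) {M : ℝ}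
    (hle : ∀ x, ‖T x‖ ^ 2 ≤ M * ‖x‖ ^ 2) {x : E} (hx : x ≠ 0)
    (heq : ‖T x‖ ^ 2 = M * ‖x‖ ^ 2) : ‖T‖ = √M := by
  have hxpos : 0 < ‖x‖ := norm_pos_iff.2 hx
  have hM : 0 ≤ M := nonneg_of_mul_nonneg_left (heq ▸ sq_nonneg ‖T x‖) (pow_pos hxpos 2)
  have hsqrt : ∀ y : E, √(M * ‖y‖ ^ 2) = √M * ‖y‖ := fun y => by
    rw [Real.sqrt_mul hM, Real.sqrt_sq (norm_nonneg y)]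
  refine le_antisymm (T.opNorm_le_bound (Real.sqrt_nonneg M) fun y => ?_) ?_
  · exact hsqrt y ▸ Real.le_sqrt_of_sq_le (hle y)
  · refine le_of_mul_le_mul_right ?_ hxpos
    rw [← hsqrt, ← heq, Real.sqrt_sq (norm_nonneg _)]
    exact T.le_opNorm x

theorem two_mul_mul_mul_le_add_of_sq_le_mul {p q m : ℝ} (hp : 0 ≤ p) (hq : 0 ≤ q)
    (hm : m ^ 2 ≤ p * q) (u v : ℝ) : 2 * m * u * v ≤ p * u ^ 2 + q * v ^ 2 := by
  rcases hp.eq_or_lt with rfl | hp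
  · obtain rfl : m = 0 := by nlinarith
    nlinarith
  · refine le_of_mul_le_mul_left ?_ hp
    nlinarith [sq_nonneg (p * u - m * v), mul_nonneg (sub_nonneg.2 hm) (sq_nonneg v)]

theorem larger_root_ge_and_sub_mul_sub_eq {a c m μ : ℝ} (hm : 0 ≤ m)
    (hμ : μ = (a + c + √((a + c) ^ 2 - 4 * (a * c - m))) / 2) :
    a ≤ μ ∧ c ≤ μ ∧ (μ - a) * (μ - c) = m := by
  have hdisc : (a + c) ^ 2 - 4 * (a * c - m) = (a - c) ^ 2 + 4 * m := by ring
  rw [hdisc] at hμ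
  have hsq := Real.sq_sqrt (by positivity : 0 ≤ (a - c) ^ 2 + 4 * m)
  have habs : |a - c| ≤ √((a - c) ^ 2 + 4 * m) :=
    Real.abs_le_sqrt (by linarith)
  refine ⟨?_, ?_, ?_⟩
  · linarith [le_abs_self (a - c)]
  · linarith [neg_abs_le (a - c)]
  · rw [hμ]; linear_combination hsq / 4

namespace Complex

theorem sq_norm_mul_add_mul (p q x y : ℂ) :
    ‖p * x + q * y‖ ^ 2 =
      ‖p‖ ^ 2 * ‖x‖ ^ 2 + ‖q‖ ^ 2 * ‖y‖ ^ 2 + 2 * (conj p * q * conj x * y).re := by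
  simp only [Complex.sq_norm, normSq_apply, mul_re, mul_im, add_re, add_im, conj_re, conj_im]
  ring

theorem sq_norm_add_sq_norm_mul (p q r s : ℂ) :
    (‖p‖ ^ 2 + ‖r‖ ^ 2) * (‖q‖ ^ 2 + ‖s‖ ^ 2) =
      ‖conj p * q + conj r * s‖ ^ 2 + ‖p * s - q * r‖ ^ 2 := by
  simp only [Complex.sq_norm, normSq_apply, mul_re, mul_im, add_re, add_im, sub_re, sub_im,
    conj_re, conj_im]
  ring

end Complex

theorem Matrix.sq_norm_toEuclideanCLM_apply_fin_two (Φ : Matrix (Fin 2) (Fin 2) ℂ)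
    (v : EuclideanSpace ℂ (Fin 2)) :
    ‖toEuclideanCLM (𝕜 := ℂ) Φ v‖ ^ 2 =
      (‖Φ 0 0‖ ^ 2 + ‖Φ 1 0‖ ^ 2) * ‖v 0‖ ^ 2 + (‖Φ 0 1‖ ^ 2 + ‖Φ 1 1‖ ^ 2) * ‖v 1‖ ^ 2 +
        2 * ((conj (Φ 0 0) * Φ 0 1 + conj (Φ 1 0) * Φ 1 1) * conj (v 0) * v 1).re := by
  rw [EuclideanSpace.norm_sq_eq, Fin.sum_univ_two]
  simp only [ofLp_toEuclideanCLM, mulVec, dotProduct, Fin.sum_univ_two]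
  rw [Complex.sq_norm_mul_add_mul, Complex.sq_norm_mul_add_mul]
  simp only [add_mul, Complex.add_re]
  ring

section HermitianForm

variable {a c μ : ℝ} {b : ℂ}

theorem hermitianForm_le_of_sq_norm_le_sub_mul_sub (ha : a ≤ μ) (hc : c ≤ μ)
    (hb : ‖b‖ ^ 2 ≤ (μ - a) * (μ - c)) (x y : ℂ) :
    a * ‖x‖ ^ 2 + c * ‖y‖ ^ 2 + 2 * (b * conj x * y).re ≤ μ * (‖x‖ ^ 2 + ‖y‖ ^ 2) := by
  have hre : (b * conj x * y).re ≤ ‖b‖ * ‖x‖ * ‖y‖ := by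
    simpa only [norm_mul, Complex.norm_conj] using Complex.re_le_norm (b * conj x * y)
  have hamgm := two_mul_mul_mul_le_add_of_sq_le_mul (sub_nonneg.2 ha) (sub_nonneg.2 hc) hb
    ‖x‖ ‖y‖
  linarith

theorem exists_hermitianForm_eq_of_sub_mul_sub_eq (hb : (μ - a) * (μ - c) = ‖b‖ ^ 2) :
    ∃ x y : ℂ, (x ≠ 0 ∨ y ≠ 0) ∧
      a * ‖x‖ ^ 2 + c * ‖y‖ ^ 2 + 2 * (b * conj x * y).re = μ * (‖x‖ ^ 2 + ‖y‖ ^ 2) := by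
  by_cases hμc : μ = c
  · exact ⟨0, 1, Or.inr one_ne_zero, by simp [hμc]⟩
  · refine ⟨(μ - c : ℝ), conj b, Or.inl (Complex.ofReal_ne_zero.2 (sub_ne_zero.2 hμc)), ?_⟩
    have hre : (b * conj ((μ - c : ℝ) : ℂ) * conj b).re = (μ - c) * ‖b‖ ^ 2 := by
      rw [Complex.conj_ofReal, mul_comm b, mul_assoc, Complex.mul_conj, Complex.normSq_eq_norm_sq]
      norm_cast
    rw [hre, Complex.norm_conj, Complex.norm_real, Real.norm_eq_abs, sq_abs]
    linear_combination (c - μ) * hb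

end HermitianForm

open ContinuousLinearMap in
/-- The operator norm (induced by the Euclidean norm on `ℂ²`) of a `2 × 2` complex matrix
`Φ` equals `√((φ + √(φ² − 4|ω|²))/2)`, where `φ` is the squared Frobenius norm of `Φ` and
`ω = det Φ`. -/
theorem norm_two_by_two_matrix_eq
    (Φ : Matrix (Fin 2) (Fin 2) ℂ)
    (φ : ℝ) (hφ : φ = ‖Φ 0 0‖ ^ 2 + ‖Φ 0 1‖ ^ 2 +
      ‖Φ 1 0‖ ^ 2 + ‖Φ 1 1‖ ^ 2)
    (ω : ℂ) (hω : ω = Φ 0 0 * Φ 1 1 - Φ 0 1 * Φ 1 0) :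
    ‖Matrix.toEuclideanCLM (𝕜 := ℂ) Φ‖ =
      Real.sqrt ((φ + Real.sqrt (φ ^ 2 - 4 * ‖ω‖ ^ 2)) / 2) := by
  set a := ‖Φ 0 0‖ ^ 2 + ‖Φ 1 0‖ ^ 2
  set c := ‖Φ 0 1‖ ^ 2 + ‖Φ 1 1‖ ^ 2
  set b := conj (Φ 0 0) * Φ 0 1 + conj (Φ 1 0) * Φ 1 1
  have hφ' : φ = a + c := by rw [hφ]; ring
  have hω' : ‖ω‖ ^ 2 = a * c - ‖b‖ ^ 2 := by
    rw [hω, Complex.sq_norm_add_sq_norm_mul]; ring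
  obtain ⟨ha, hc, hb⟩ := larger_root_ge_and_sub_mul_sub_eq (sq_nonneg ‖b‖)
    (μ := (φ + √(φ ^ 2 - 4 * ‖ω‖ ^ 2)) / 2) (by rw [hω', hφ'])
  obtain ⟨x, y, hxy, heq⟩ := exists_hermitianForm_eq_of_sub_mul_sub_eq hb
  have hnorm (v : EuclideanSpace ℂ (Fin 2)) : ‖v‖ ^ 2 = ‖v 0‖ ^ 2 + ‖v 1‖ ^ 2 := by
    rw [EuclideanSpace.norm_sq_eq, Fin.sum_univ_two]
  refine opNorm_eq_sqrt_of_sq_bound_attained _ (fun v => ?_) (x := !₂[x, y]) ?_ ?_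
  · rw [Matrix.sq_norm_toEuclideanCLM_apply_fin_two, hnorm]
    exact hermitianForm_le_of_sq_norm_le_sub_mul_sub ha hc hb.ge _ _
  · simpa [← WithLp.ofLp_eq_zero, or_iff_not_imp_left] using hxy
  · rw [Matrix.sq_norm_toEuclideanCLM_apply_fin_two, hnorm]
    exact heq
end

section
/- If P and Q are orthogonal projections on a Hilbert space with ‖PQ‖ < 1 such that Ran P ⊕ Ran Q (as a direct, not necessarily orthogonal, sum) is the whole space, then T = (I − PQ)⁻¹ P (I − PQ) is the idempotent with range Ran P and kernel Ran Q. -/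
/-!
Write `A = 1 - PQ`. Because `P` is idempotent, `(1 - P) A = 1 - P`, hence `(1 - P) A⁻¹ = 1 - P`.
The first identity gives `A P = P A P` and so `T P = P`; the second gives `(1 - P) T = 0`, i.e.
`P T = T`; and `P A Q = PQ - PQ = 0` gives `T Q = 0`. Thus `T` is an idempotent with the range of
`P` that annihilates `Ran Q`. As `Ker T` meets `Ran T = Ran P` trivially and `Ran P + Ran Q = H`,
the modular law forces `Ker T = Ran Q`.
-/

noncomputable def afriat {R : Type*} [Ring R] (p q : R) : R :=
  Ring.inverse (1 - p * q) * (p * (1 - p * q))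

section Ring

variable {R : Type*} [Ring R] {p q : R}

theorem IsIdempotentElem.one_sub_mul_one_sub_mul (hp : IsIdempotentElem p) (q : R) :
    (1 - p) * (1 - p * q) = 1 - p := by
  rw [mul_sub, mul_one, ← mul_assoc, hp.one_sub_mul_self, zero_mul, sub_zero]

theorem IsIdempotentElem.one_sub_mul_inverse_one_sub_mul (hp : IsIdempotentElem p)
    (hu : IsUnit (1 - p * q)) : (1 - p) * Ring.inverse (1 - p * q) = 1 - p := by
  calc (1 - p) * Ring.inverse (1 - p * q)
      = (1 - p) * (1 - p * q) * Ring.inverse (1 - p * q) := by rw [hp.one_sub_mul_one_sub_mul]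
    _ = 1 - p := by rw [mul_assoc, Ring.mul_inverse_cancel _ hu, mul_one]

theorem afriat_mul_left (hp : IsIdempotentElem p) (hu : IsUnit (1 - p * q)) :
    afriat p q * p = p := by
  have h : (1 - p) * ((1 - p * q) * p) = 0 := by
    rw [← mul_assoc, hp.one_sub_mul_one_sub_mul, hp.one_sub_mul_self]
  rw [one_sub_mul, sub_eq_zero] at h
  rw [afriat, mul_assoc, mul_assoc, ← h, ← mul_assoc, Ring.inverse_mul_cancel _ hu, one_mul]

theorem mul_afriat_left (hp : IsIdempotentElem p) (hu : IsUnit (1 - p * q)) :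
    p * afriat p q = afriat p q := by
  have h : (1 - p) * afriat p q = 0 := by
    rw [afriat, ← mul_assoc, hp.one_sub_mul_inverse_one_sub_mul hu, ← mul_assoc,
      hp.one_sub_mul_self, zero_mul]
  rwa [one_sub_mul, sub_eq_zero, eq_comm] at h

theorem afriat_mul_right (hp : IsIdempotentElem p) (hq : IsIdempotentElem q) :
    afriat p q * q = 0 := by
  have : p * (1 - p * q) * q = 0 := by
    rw [mul_sub, mul_one, ← mul_assoc, hp.eq, sub_mul, mul_assoc, hq.eq, sub_self]
  rw [afriat, mul_assoc, this, mul_zero]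

theorem isIdempotentElem_afriat (hp : IsIdempotentElem p) (hu : IsUnit (1 - p * q)) :
    IsIdempotentElem (afriat p q) := by
  calc afriat p q * afriat p q = afriat p q * p * afriat p q := by
        rw [mul_assoc, mul_afriat_left hp hu]
    _ = afriat p q := by rw [afriat_mul_left hp hu, mul_afriat_left hp hu]

end Ring

namespace LinearMap

variable {S M : Type*} [Ring S] [AddCommGroup M] [Module S M] {f g : Module.End S M}

theorem IsIdempotentElem.range_eq_of_mul_eq (hf : IsIdempotentElem f) (hg : IsIdempotentElem g)
    (hfg : f * g = g) (hgf : g * f = f) : range f = range g :=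
  le_antisymm ((IsIdempotentElem.comp_eq_right_iff hg f).1 hgf)
    ((IsIdempotentElem.comp_eq_right_iff hf g).1 hfg)

theorem IsIdempotentElem.ker_eq_of_le_of_sup_eq_top (hf : IsIdempotentElem f)
    {U : Submodule S M} (hU : U ≤ ker f) (hsup : range f ⊔ U = ⊤) :
    ker f = U :=
  (eq_of_le_of_inf_le_of_sup_le hU
    ((IsIdempotentElem.isCompl hf).symm.inf_eq_bot ▸ bot_le)
    (sup_comm U _ ▸ hsup ▸ le_top)).symm

end LinearMap

theorem afriat_formula_idempotent_general
    {H : Type*} [NormedAddCommGroup H] [InnerProductSpace ℂ H] [CompleteSpace H]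
    (P Q : H →L[ℂ] H)
    (hP2 : IsIdempotentElem P)
    (hQ2 : IsIdempotentElem Q)
    (hPQ : ‖P * Q‖ < 1)
    (hsum : LinearMap.range (P : H →ₗ[ℂ] H) ⊔ LinearMap.range (Q : H →ₗ[ℂ] H) = ⊤)
    (T : H →L[ℂ] H) (hT : T = Ring.inverse (1 - P * Q) * (P * (1 - P * Q))) :
    IsIdempotentElem T ∧ LinearMap.range (T : H →ₗ[ℂ] H) = LinearMap.range (P : H →ₗ[ℂ] H) ∧
      LinearMap.ker (T : H →ₗ[ℂ] H) = LinearMap.range (Q : H →ₗ[ℂ] H) := by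
  replace hT : T = afriat P Q := hT
  have hu : IsUnit (1 - P * Q) := isUnit_one_sub_of_norm_lt_one hPQ
  have hTP : T * P = P := hT ▸ afriat_mul_left hP2 hu
  have hPT : P * T = T := hT ▸ mul_afriat_left hP2 hu
  have hTQ : T * Q = 0 := hT ▸ afriat_mul_right hP2 hQ2
  have hT2 : IsIdempotentElem T := hT ▸ isIdempotentElem_afriat hP2 hu
  have hTlin := ContinuousLinearMap.IsIdempotentElem.toLinearMap hT2
  have hrange : LinearMap.range (T : H →ₗ[ℂ] H) = LinearMap.range (P : H →ₗ[ℂ] H) :=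
    LinearMap.IsIdempotentElem.range_eq_of_mul_eq hTlin
      (ContinuousLinearMap.IsIdempotentElem.toLinearMap hP2) (congrArg ContinuousLinearMap.toLinearMap hTP)
      (congrArg ContinuousLinearMap.toLinearMap hPT)
  have hker : LinearMap.range (Q : H →ₗ[ℂ] H) ≤ LinearMap.ker (T : H →ₗ[ℂ] H) :=
    LinearMap.range_le_ker_iff.2 (congrArg ContinuousLinearMap.toLinearMap hTQ)
  exact ⟨hT2, hrange,
    LinearMap.IsIdempotentElem.ker_eq_of_le_of_sup_eq_top hTlin hker (hrange ▸ hsum)⟩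

/-- If `P` and `Q` are orthogonal projections on a complex Hilbert space with `‖PQ‖ < 1`
such that `Ran P ⊕ Ran Q` (a direct, not necessarily orthogonal, sum) is the whole space,
then `T = (I − PQ)⁻¹ P (I − PQ)` is the idempotent with range `Ran P` and kernel `Ran Q`. -/
theorem afriat_formula_idempotent
    {H : Type*} [NormedAddCommGroup H] [InnerProductSpace ℂ H] [CompleteSpace H]
    (P Q : H →L[ℂ] H)
    (hP : IsSelfAdjoint P) (hP2 : IsIdempotentElem P)
    (hQ : IsSelfAdjoint Q) (hQ2 : IsIdempotentElem Q)
    (hPQ : ‖P * Q‖ < 1)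
    (hsum : LinearMap.range (P : H →ₗ[ℂ] H) ⊔ LinearMap.range (Q : H →ₗ[ℂ] H) = ⊤)
    (hint : LinearMap.range (P : H →ₗ[ℂ] H) ⊓ LinearMap.range (Q : H →ₗ[ℂ] H) = ⊥)
    (T : H →L[ℂ] H) (hT : T = Ring.inverse (1 - P * Q) * (P * (1 - P * Q))) :
    IsIdempotentElem T ∧ LinearMap.range (T : H →ₗ[ℂ] H) = LinearMap.range (P : H →ₗ[ℂ] H) ∧
      LinearMap.ker (T : H →ₗ[ℂ] H) = LinearMap.range (Q : H →ₗ[ℂ] H) :=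
  afriat_formula_idempotent_general P Q hP2 hQ2 hPQ hsum T hT
end

section
/- Let T be a bounded idempotent on a Hilbert space with ‖T‖ > 1 (a genuinely skew projection), let P be the orthogonal projection onto Ran T and Q the orthogonal projection onto Ker T. Then ‖PQ‖ < 1 and T = (I − PQ)⁻¹ P (I − PQ). -/
/-!
Write `c = ‖T‖ / √(1 + ‖T‖²) < 1`. For `z ∈ ker T` we have `T (z - P z) = -P z` and
`z - P z ⟂ P z`, so `‖P z‖ ≤ c ‖z‖`; since `Q` is a contraction onto `ker T`, this gives
`‖PQ‖ ≤ c`, and `I - PQ` is invertible by the Neumann series. The similarity is the purely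
algebraic identity `(I - PQ) T = P (I - PQ)`, which follows from
`PT = T`, `P² = P` and `Q (I - T) = I - T`.
-/

lemma one_sub_mul_mul_eq_mul_one_sub_mul {R : Type*} [Ring R] {p q t : R}
    (hp : IsIdempotentElem p) (hpt : p * t = t) (hqt : q * (1 - t) = 1 - t) :
    (1 - p * q) * t = p * (1 - p * q) := by
  calc (1 - p * q) * t = t - p * q + p * (q * (1 - t)) := by noncomm_ring
    _ = p - p * q := by rw [hqt, mul_sub, mul_one, hpt]; abel
    _ = p * (1 - p * q) := by rw [mul_sub, mul_one, ← mul_assoc, hp.eq]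

lemma div_sqrt_one_add_sq_lt_one (a : ℝ) : a / √(1 + a ^ 2) < 1 := by
  rw [div_lt_one (by positivity)]
  exact Real.lt_sqrt_of_sq_lt (by linarith)

namespace ContinuousLinearMap

variable {R M : Type*} [Ring R] [TopologicalSpace M] [AddCommGroup M] [Module R M]

lemma mul_eq_right_of_range_le {p q : M →L[R] M} (hq : IsIdempotentElem q)
    (h : LinearMap.range (p : M →ₗ[R] M) ≤ LinearMap.range (q : M →ₗ[R] M)) : q * p = p :=
  coe_inj.mp <|
    (LinearMap.IsIdempotentElem.comp_eq_right_iff (IsIdempotentElem.toLinearMap hq) _).mpr h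

lemma mul_eq_zero_of_range_le_ker {p q : M →L[R] M}
    (h : LinearMap.range (p : M →ₗ[R] M) ≤ LinearMap.ker (q : M →ₗ[R] M)) : q * p = 0 :=
  coe_inj.mp (LinearMap.range_le_ker_iff.mp h)

lemma range_one_sub_eq_ker [IsTopologicalAddGroup M] {p : M →L[R] M} (hp : IsIdempotentElem p) :
    LinearMap.range ((1 - p : M →L[R] M) : M →ₗ[R] M) = LinearMap.ker (p : M →ₗ[R] M) := by
  rw [toLinearMap_sub, toLinearMap_one,
    LinearMap.IsIdempotentElem.ker_eq_range_one_sub (IsIdempotentElem.toLinearMap hp)]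

end ContinuousLinearMap

namespace IsStarProjection

variable {𝕜 E : Type*} [RCLike 𝕜] [NormedAddCommGroup E] [InnerProductSpace 𝕜 E] [CompleteSpace E]
  {p : E →L[𝕜] E}

lemma norm_sq_eq_add_norm_sq (hp : IsStarProjection p) (x : E) :
    ‖x‖ ^ 2 = ‖p x‖ ^ 2 + ‖x - p x‖ ^ 2 := by
  obtain ⟨K, _, rfl⟩ := isStarProjection_iff_eq_starProjection.mp hp
  simpa [K.starProjection_orthogonal'] using K.norm_sq_eq_add_norm_sq_starProjection x

lemma norm_apply_le_of_apply_eq_zero (hp : IsStarProjection p) {T : E →L[𝕜] E}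
    (hTp : T * p = p) {z : E} (hz : T z = 0) : ‖p z‖ ≤ ‖T‖ / √(1 + ‖T‖ ^ 2) * ‖z‖ := by
  have hTz : T (z - p z) = -p z := by
    rw [map_sub, hz, ← mul_apply_eq_comp, hTp, zero_sub]
  have hle : ‖p z‖ ≤ ‖T‖ * ‖z - p z‖ := by
    simpa [hTz] using T.le_opNorm (z - p z)
  have hsq : (1 + ‖T‖ ^ 2) * ‖p z‖ ^ 2 ≤ ‖T‖ ^ 2 * ‖z‖ ^ 2 := by
    have := pow_le_pow_left₀ (norm_nonneg _) hle 2
    nlinarith [hp.norm_sq_eq_add_norm_sq z]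
  rw [div_mul_eq_mul_div, le_div_iff₀ (by positivity),
    ← pow_le_pow_iff_left₀ (by positivity) (by positivity) two_ne_zero,
    mul_pow, mul_pow, Real.sq_sqrt (by positivity)]
  linarith

lemma norm_mul_le_of_mul_eq_zero (hp : IsStarProjection p) {T q : E →L[𝕜] E}
    (hTp : T * p = p) (hTq : T * q = 0) : ‖p * q‖ ≤ ‖T‖ / √(1 + ‖T‖ ^ 2) * ‖q‖ := by
  refine ContinuousLinearMap.opNorm_le_bound _ (by positivity) fun x => ?_
  calc ‖p (q x)‖ ≤ ‖T‖ / √(1 + ‖T‖ ^ 2) * ‖q x‖ :=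
        hp.norm_apply_le_of_apply_eq_zero hTp (by rw [← mul_apply_eq_comp, hTq, zero_apply])
    _ ≤ ‖T‖ / √(1 + ‖T‖ ^ 2) * (‖q‖ * ‖x‖) := by gcongr; exact q.le_opNorm x
    _ = _ := by ring

end IsStarProjection

theorem skew_projection_afriat_general
    {H : Type*} [NormedAddCommGroup H] [InnerProductSpace ℂ H] [CompleteSpace H]
    (T : H →L[ℂ] H) (hT2 : IsIdempotentElem T)
    (P : H →L[ℂ] H) (hP : IsSelfAdjoint P) (hP2 : IsIdempotentElem P)
    (hPr : LinearMap.range (P : H →ₗ[ℂ] H) = LinearMap.range (T : H →ₗ[ℂ] H))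
    (Q : H →L[ℂ] H) (hQ : IsSelfAdjoint Q) (hQ2 : IsIdempotentElem Q)
    (hQr : LinearMap.range (Q : H →ₗ[ℂ] H) = LinearMap.ker (T : H →ₗ[ℂ] H)) :
    ‖P * Q‖ < 1 ∧ T = Ring.inverse (1 - P * Q) * (P * (1 - P * Q)) := by
  have hTP : T * P = P := ContinuousLinearMap.mul_eq_right_of_range_le hT2 hPr.le
  have hPT : P * T = T := ContinuousLinearMap.mul_eq_right_of_range_le hP2 hPr.ge
  have hTQ : T * Q = 0 := ContinuousLinearMap.mul_eq_zero_of_range_le_ker hQr.le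
  have hQT : Q * (1 - T) = 1 - T := ContinuousLinearMap.mul_eq_right_of_range_le hQ2
    ((ContinuousLinearMap.range_one_sub_eq_ker hT2).trans hQr.symm).le
  have hnorm : ‖P * Q‖ < 1 := calc
    ‖P * Q‖ ≤ ‖T‖ / √(1 + ‖T‖ ^ 2) * ‖Q‖ :=
      IsStarProjection.norm_mul_le_of_mul_eq_zero ⟨hP2, hP⟩ hTP hTQ
    _ ≤ ‖T‖ / √(1 + ‖T‖ ^ 2) :=
      mul_le_of_le_one_right (by positivity) (IsStarProjection.norm_le Q ⟨hQ2, hQ⟩)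
    _ < 1 := div_sqrt_one_add_sq_lt_one _
  refine ⟨hnorm, ?_⟩
  have hunit : IsUnit (1 - P * Q) := (Units.oneSub _ hnorm).isUnit
  rw [← one_sub_mul_mul_eq_mul_one_sub_mul hP2 hPT hQT, Ring.inverse_mul_cancel_left _ _ hunit]

/-- Let `T` be a bounded idempotent on a complex Hilbert space with `‖T‖ > 1` (a genuinely
skew projection), let `P` be the orthogonal projection onto `Ran T` and `Q` the orthogonal
projection onto `Ker T`. Then `‖PQ‖ < 1` and `T = (I − PQ)⁻¹ P (I − PQ)`. -/
theorem skew_projection_afriat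
    {H : Type*} [NormedAddCommGroup H] [InnerProductSpace ℂ H] [CompleteSpace H]
    (T : H →L[ℂ] H) (hT2 : IsIdempotentElem T) (hTn : 1 < ‖T‖)
    (P : H →L[ℂ] H) (hP : IsSelfAdjoint P) (hP2 : IsIdempotentElem P)
    (hPr : LinearMap.range (P : H →ₗ[ℂ] H) = LinearMap.range (T : H →ₗ[ℂ] H))
    (Q : H →L[ℂ] H) (hQ : IsSelfAdjoint Q) (hQ2 : IsIdempotentElem Q)
    (hQr : LinearMap.range (Q : H →ₗ[ℂ] H) = LinearMap.ker (T : H →ₗ[ℂ] H)) :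
    ‖P * Q‖ < 1 ∧ T = Ring.inverse (1 - P * Q) * (P * (1 - P * Q)) :=
  skew_projection_afriat_general T hT2 P hP hP2 hPr Q hQ hQ2 hQr
end

section
/- Let H be a bounded self-adjoint operator on a Hilbert space M with σ(H) ⊆ (0,1], and let T be the operator on M ⊕ M given in block form by T = [[I, −√(H⁻¹ − I)],[0, 0]]. Then T is idempotent and T attains its norm if and only if min σ(H) is an eigenvalue of H. -/
/-!
An operator `T` attains its norm at `x ≠ 0` exactly when `T† T x = ‖T‖² x`, by the equality case of
`‖T x‖² = ⟪T† T x, x⟫ ≤ ‖T† T x‖ ‖x‖ ≤ ‖T‖² ‖x‖²`. Applying `T`, resp. `T†`, moves such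
eigenvectors between `T† T` and `T T†`, and for the block operator `T = [[1, -S], [0, 0]]` one has
`T T† = [[1 + S², 0], [0, 0]] = [[H⁻¹, 0], [0, 0]]`. Hence `‖T‖² = ‖T T†‖ = ‖H⁻¹‖ = 1 / min σ(H)`,
and `T` attains its norm iff `1 / min σ(H)` is an eigenvalue of `H⁻¹`, i.e. iff `min σ(H)` is an
eigenvalue of `H`.
-/

open ContinuousLinearMap RCLike
open scoped InnerProductSpace InnerProduct

namespace ContinuousLinearMap

variable {𝕜 E F : Type*} [RCLike 𝕜]

theorem exists_norm_eq_one_and_norm_apply_eq_opNorm_iff [NormedAddCommGroup E] [NormedSpace 𝕜 E]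
    [SeminormedAddCommGroup F] [NormedSpace 𝕜 F] (T : E →L[𝕜] F) :
    (∃ x, ‖x‖ = 1 ∧ ‖T x‖ = ‖T‖) ↔ ∃ x ≠ 0, ‖T x‖ = ‖T‖ * ‖x‖ := by
  constructor
  · rintro ⟨x, hx, hTx⟩
    exact ⟨x, by rintro rfl; simp at hx, by rw [hx, mul_one, hTx]⟩
  · rintro ⟨x, hx, hTx⟩
    refine ⟨(‖x‖⁻¹ : 𝕜) • x, norm_smul_inv_norm hx, ?_⟩
    rw [map_smul, norm_smul, hTx, norm_inv, norm_algebraMap', norm_norm]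
    field_simp

theorem units_inv_apply_eq_inv_smul_iff {K V : Type*} [Field K] [TopologicalSpace V]
    [AddCommGroup V] [Module K V] (u : (V →L[K] V)ˣ) {c : K} (hc : c ≠ 0) (v : V) :
    (↑u⁻¹ : V →L[K] V) v = c⁻¹ • v ↔ (u : V →L[K] V) v = c • v := by
  have h_inv_apply (w : V) : (↑u⁻¹ : V →L[K] V) ((u : V →L[K] V) w) = w :=
    DFunLike.congr_fun u.inv_mul w
  have h_apply_inv (w : V) : (u : V →L[K] V) ((↑u⁻¹ : V →L[K] V) w) = w :=
    DFunLike.congr_fun u.mul_inv w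
  constructor
  · intro h
    calc (u : V →L[K] V) v = (u : V →L[K] V) (c • (↑u⁻¹ : V →L[K] V) v) := by
          rw [h, smul_inv_smul₀ hc]
      _ = c • v := by rw [map_smul, h_apply_inv]
  · intro h
    calc (↑u⁻¹ : V →L[K] V) v = (↑u⁻¹ : V →L[K] V) (c⁻¹ • (u : V →L[K] V) v) := by
          rw [h, inv_smul_smul₀ hc]
      _ = c⁻¹ • v := by rw [map_smul, h_inv_apply]

variable [NormedAddCommGroup E] [InnerProductSpace 𝕜 E] [CompleteSpace E]
  [NormedAddCommGroup F] [InnerProductSpace 𝕜 F] [CompleteSpace F] (T : E →L[𝕜] F)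

theorem adjoint_apply_apply_of_norm_apply_eq_opNorm_mul {x : E} (h : ‖T x‖ = ‖T‖ * ‖x‖) :
    (T†) (T x) = ((‖T‖ ^ 2 : ℝ) : 𝕜) • x := by
  set c := ‖T‖ ^ 2
  have h_re : re ⟪(T†) (T x), x⟫_𝕜 = c * ‖x‖ ^ 2 := by
    rw [adjoint_inner_left, inner_self_eq_norm_sq, h]; ring
  have h_norm : ‖(T†) (T x)‖ ≤ c * ‖x‖ := calc
    _ ≤ ‖T†‖ * ‖T x‖ := le_opNorm _ _
    _ = c * ‖x‖ := by rw [adjoint.norm_map, h]; ring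
  have h_sq : ‖(T†) (T x)‖ ^ 2 ≤ (c * ‖x‖) ^ 2 := pow_le_pow_left₀ (norm_nonneg _) h_norm 2
  -- `‖T† T x - c x‖² = ‖T† T x‖² - c² ‖x‖² ≤ 0`
  rw [← sub_eq_zero, ← norm_eq_zero, ← sq_eq_zero_iff]
  refine le_antisymm ?_ (sq_nonneg _)
  rw [@norm_sub_sq 𝕜, inner_smul_real_right, smul_re, h_re, norm_smul, norm_ofReal,
    abs_of_nonneg (by positivity)]
  nlinarith

theorem norm_apply_eq_opNorm_mul_of_apply_adjoint_apply_eq {y : F}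
    (h : T ((T†) y) = ((‖T‖ ^ 2 : ℝ) : 𝕜) • y) : ‖T ((T†) y)‖ = ‖T‖ * ‖(T†) y‖ := by
  have h_sq : ‖(T†) y‖ ^ 2 = (‖T‖ * ‖y‖) ^ 2 := by
    rw [← inner_self_eq_norm_sq (𝕜 := 𝕜), adjoint_inner_right, h, inner_smul_real_left,
      smul_re, inner_self_eq_norm_sq]; ring
  rw [(pow_left_inj₀ (norm_nonneg _) (by positivity) two_ne_zero).mp h_sq, h, norm_smul,
    norm_ofReal, abs_of_nonneg (by positivity)]
  ring

theorem exists_norm_apply_eq_opNorm_mul_iff (hT : T ≠ 0) :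
    (∃ x ≠ 0, ‖T x‖ = ‖T‖ * ‖x‖) ↔ ∃ y ≠ 0, T ((T†) y) = ((‖T‖ ^ 2 : ℝ) : 𝕜) • y := by
  have hc : ((‖T‖ ^ 2 : ℝ) : 𝕜) ≠ 0 := by simpa using hT
  constructor
  · rintro ⟨x, hx, h⟩
    refine ⟨T x, fun h0 => ?_, by
      rw [adjoint_apply_apply_of_norm_apply_eq_opNorm_mul T h, map_smul]⟩
    rw [h0, norm_zero, eq_comm, mul_eq_zero, norm_eq_zero, norm_eq_zero] at h
    exact h.elim hT hx
  · rintro ⟨y, hy, h⟩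
    refine ⟨(T†) y, fun h0 => hy ?_, norm_apply_eq_opNorm_mul_of_apply_adjoint_apply_eq T h⟩
    rwa [h0, map_zero, eq_comm, smul_eq_zero_iff_right hc] at h

end ContinuousLinearMap

theorem norm_inv_eq_inv_of_isLeast_spectrum {A : Type*} [CStarAlgebra A] (u : Aˣ)
    (hu : IsSelfAdjoint (u : A)) {m : ℝ} (hm : IsLeast (spectrum ℝ (u : A)) m) (hm0 : 0 < m) :
    ‖(↑u⁻¹ : A)‖ = m⁻¹ := by
  have : Nontrivial A := by
    by_contra h
    rw [not_nontrivial_iff_subsingleton] at h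
    simpa [spectrum.of_subsingleton] using hm.1
  have hu_inv : IsSelfAdjoint (↑u⁻¹ : A) := by
    have h : IsSelfAdjoint u := Units.ext hu.star_eq
    rw [IsSelfAdjoint, ← Units.coe_star, h.inv.star_eq]
  refine (IsometricContinuousFunctionalCalculus.isGreatest_norm_spectrum (↑u⁻¹ : A)
    hu_inv).unique ⟨⟨m⁻¹, ?_, ?_⟩, ?_⟩
  · rw [← spectrum.map_inv, Set.inv_mem_inv]; exact hm.1
  · simp [abs_of_pos hm0]
  · rintro _ ⟨k, hk, rfl⟩
    rw [← spectrum.map_inv, Set.mem_inv] at hk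
    have hmk : m ≤ k⁻¹ := hm.2 hk
    have hk0 : 0 < k := inv_pos.mp (hm0.trans_le hmk)
    change ‖k‖ ≤ m⁻¹
    rw [Real.norm_of_nonneg hk0.le]
    exact (le_inv_comm₀ hm0 hk0).mp hmk

section SkewProjection

variable {𝕜 E : Type*} [RCLike 𝕜]

def skewProjection [SeminormedAddCommGroup E] [NormedSpace 𝕜 E] (S : E →L[𝕜] E) :
    WithLp 2 (E × E) →L[𝕜] WithLp 2 (E × E) :=
  (WithLp.prodContinuousLinearEquiv 2 𝕜 E E).symm.toContinuousLinearMap ∘L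
    ((fst 𝕜 E E - S ∘L snd 𝕜 E E).prod 0) ∘L
    (WithLp.prodContinuousLinearEquiv 2 𝕜 E E).toContinuousLinearMap

@[simp]
theorem skewProjection_apply [SeminormedAddCommGroup E] [NormedSpace 𝕜 E] (S : E →L[𝕜] E)
    (z : WithLp 2 (E × E)) : skewProjection S z = WithLp.toLp 2 (z.fst - S z.snd, 0) :=
  rfl

theorem isIdempotentElem_skewProjection [SeminormedAddCommGroup E] [NormedSpace 𝕜 E]
    (S : E →L[𝕜] E) : IsIdempotentElem (skewProjection S) := by
  ext z; simp

variable [NormedAddCommGroup E] [InnerProductSpace 𝕜 E] [CompleteSpace E] {S : E →L[𝕜] E}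

theorem adjoint_skewProjection_apply (hS : IsSelfAdjoint S) (z : WithLp 2 (E × E)) :
    ((skewProjection S)†) z = WithLp.toLp 2 (z.fst, -S z.fst) := by
  refine ext_inner_right 𝕜 fun w => ?_
  rw [adjoint_inner_left]
  simp only [skewProjection_apply, WithLp.prod_inner_apply, WithLp.ofLp_fst, WithLp.ofLp_snd,
    inner_sub_right, inner_zero_right, add_zero, inner_neg_left]
  rw [← adjoint_inner_left, hS.adjoint_eq, sub_eq_add_neg]

theorem skewProjection_adjoint_apply (hS : IsSelfAdjoint S) (z : WithLp 2 (E × E)) :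
    skewProjection S (((skewProjection S)†) z) = WithLp.toLp 2 ((1 + S * S) z.fst, 0) := by
  simp [adjoint_skewProjection_apply hS]

theorem sq_norm_skewProjection (hS : IsSelfAdjoint S) :
    ‖skewProjection S‖ ^ 2 = ‖1 + S * S‖ := by
  have h := norm_adjoint_comp_self ((skewProjection S)†)
  rw [adjoint_adjoint, adjoint.norm_map, ← sq] at h
  rw [← h]
  refine le_antisymm (opNorm_le_bound _ (norm_nonneg _) fun z => ?_)
    (opNorm_le_bound _ (norm_nonneg _) fun u => ?_)
  · calc ‖(skewProjection S ∘L ((skewProjection S)†)) z‖ = ‖(1 + S * S) z.fst‖ := by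
          simp [skewProjection_adjoint_apply hS]
      _ ≤ ‖1 + S * S‖ * ‖z‖ := (le_opNorm _ _).trans
          (mul_le_mul_of_nonneg_left (WithLp.norm_fst_le E z) (norm_nonneg _))
  · calc ‖(1 + S * S) u‖
        = ‖(skewProjection S ∘L ((skewProjection S)†)) (WithLp.toLp 2 (u, 0))‖ := by
          simp [skewProjection_adjoint_apply hS]
      _ ≤ _ := (le_opNorm _ _).trans_eq (by simp)

theorem exists_skewProjection_adjoint_apply_eq_smul_iff (hS : IsSelfAdjoint S) {c : 𝕜}
    (hc : c ≠ 0) :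
    (∃ z ≠ 0, skewProjection S (((skewProjection S)†) z) = c • z) ↔
      ∃ v ≠ 0, (1 + S * S) v = c • v := by
  simp only [skewProjection_adjoint_apply hS]
  constructor
  · rintro ⟨z, hz, h⟩
    have h_fst := congrArg WithLp.fst h
    have h_snd := congrArg WithLp.snd h
    simp only [WithLp.toLp_fst, WithLp.toLp_snd, WithLp.smul_fst, WithLp.smul_snd] at h_fst h_snd
    refine ⟨z.fst, fun h0 => hz ?_, h_fst⟩
    exact WithLp.ofLp_injective 2 (Prod.ext h0 ((smul_eq_zero_iff_right hc).mp h_snd.symm))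
  · rintro ⟨v, hv, h⟩
    exact ⟨WithLp.toLp 2 (v, 0), by simpa using hv, by simp [h, ← WithLp.toLp_smul]⟩

end SkewProjection

/-- Let `H` be a bounded self-adjoint operator on a complex Hilbert space `M` with
`σ(H) ⊆ (0,1]`, let `S = √(H⁻¹ − I)` (the positive square root), and let `T` be the block
operator `[[I, −S],[0,0]]` on `M ⊕ M` (with the ℓ² direct sum norm). Then `T` is
idempotent, and `T` attains its norm if and only if `min σ(H)` is an eigenvalue of `H`. -/
theorem block_skew_projection_normAttain_iff_min_spectrum_eigenvalue
    {M : Type*} [NormedAddCommGroup M] [InnerProductSpace ℂ M] [CompleteSpace M]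
    (H : M →L[ℂ] M) (hH : IsSelfAdjoint H)
    (hσ : spectrum ℂ H ⊆ (fun r : ℝ => (r : ℂ)) '' Set.Ioc 0 1)
    (Hinv : M →L[ℂ] M) (hHinv : H * Hinv = 1 ∧ Hinv * H = 1)
    (S : M →L[ℂ] M) (hS : S.IsPositive) (hS2 : S * S = Hinv - 1)
    (T : WithLp 2 (M × M) →L[ℂ] WithLp 2 (M × M))
    (hT : ∀ z : WithLp 2 (M × M),
      T z = (WithLp.equiv 2 (M × M)).symm
        ((WithLp.equiv 2 (M × M) z).1 - S ((WithLp.equiv 2 (M × M) z).2), 0)) :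
    IsIdempotentElem T ∧
      ((∃ x : WithLp 2 (M × M), ‖x‖ = 1 ∧ ‖T x‖ = ‖T‖) ↔
        (∃ v : M, v ≠ 0 ∧
          H v = ((sInf {r : ℝ | (r : ℂ) ∈ spectrum ℂ H} : ℝ) : ℂ) • v)) := by
  obtain rfl : T = skewProjection S := ContinuousLinearMap.ext hT
  refine ⟨isIdempotentElem_skewProjection S, ?_⟩
  rcases subsingleton_or_nontrivial M with hM | hM
  · have : Subsingleton (WithLp 2 (M × M)) := (WithLp.equiv 2 (M × M)).subsingleton
    refine iff_of_false (fun ⟨x, hx, _⟩ => ?_) fun ⟨v, hv, _⟩ => hv (Subsingleton.elim v 0)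
    simp [Subsingleton.elim x 0] at hx
  rw [show {r : ℝ | (r : ℂ) ∈ spectrum ℂ H} = spectrum ℝ H from spectrum.preimage_algebraMap ℝ]
  set m := sInf (spectrum ℝ H)
  have hm : IsLeast (spectrum ℝ H) m :=
    (spectrum.isCompact H).isLeast_sInf (ContinuousFunctionalCalculus.spectrum_nonempty H hH)
  have hm0 : 0 < m := by
    obtain ⟨s, hs, hsm⟩ := hσ (spectrum.algebraMap_mem ℂ hm.1)
    exact (show s = m by simpa using hsm) ▸ hs.1
  let U : (M →L[ℂ] M)ˣ := ⟨H, Hinv, hHinv.1, hHinv.2⟩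
  have hHinv_eq : 1 + S * S = Hinv := by rw [hS2]; abel
  have h_norm : ‖skewProjection S‖ ^ 2 = m⁻¹ := by
    rw [sq_norm_skewProjection hS.isSelfAdjoint, hHinv_eq]
    exact norm_inv_eq_inv_of_isLeast_spectrum U hH hm hm0
  have hT0 : skewProjection S ≠ 0 := by
    rw [← norm_ne_zero_iff, ← pow_ne_zero_iff two_ne_zero, h_norm]
    exact inv_ne_zero hm0.ne'
  have hm0' : (m : ℂ) ≠ 0 := by exact_mod_cast hm0.ne'
  rw [exists_norm_eq_one_and_norm_apply_eq_opNorm_iff, exists_norm_apply_eq_opNorm_mul_iff _ hT0,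
    h_norm, exists_skewProjection_adjoint_apply_eq_smul_iff hS.isSelfAdjoint (by simpa using hm0'),
    hHinv_eq]
  push_cast
  exact exists_congr fun v => and_congr_right fun _ => units_inv_apply_eq_inv_smul_iff U hm0' v
end

section
/- For the block operator T = [[I, −√(H⁻¹ − I)],[0,0]] on M ⊕ M, where H is self-adjoint with σ(H) ⊆ (0,1], one has ‖T‖ = sqrt(1/min σ(H)) = ‖H⁻¹‖^{1/2}. -/
/-!
By the C⋆-identity, `‖T‖² = ‖T T†‖`, and a direct computation gives `T† (x, y) = (x, -S x)`, so
`T T†` is the corner operator `(x, y) ↦ ((1 + S²) x, 0) = (H⁻¹ x, 0)`, whose norm is `‖H⁻¹‖`.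
Since `H⁻¹ = 1 + S²` is self-adjoint, its norm is its spectral radius, and its spectrum is the set of
inverses of the points of `σ(H) ⊆ (0, 1]`, so that radius is `1 / min σ(H)`.
-/

open ContinuousLinearMap WithLp
open scoped ENNReal

section ProdLp

variable {𝕜 E F : Type*} [NontriviallyNormedField 𝕜] [NormedAddCommGroup E] [NormedSpace 𝕜 E]
  [NormedAddCommGroup F] [NormedSpace 𝕜 F] {p : ℝ≥0∞} [Fact (1 ≤ p)]

theorem WithLp.opNorm_eq_of_apply_eq_toLp_inl {P : WithLp p (E × F) →L[𝕜] WithLp p (E × F)}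
    {A : E →L[𝕜] E} (hP : ∀ z, P z = toLp p (A z.fst, 0)) : ‖P‖ = ‖A‖ := by
  refine le_antisymm (opNorm_le_bound _ (norm_nonneg A) fun z => ?_)
    (opNorm_le_bound _ (norm_nonneg P) fun x => ?_)
  · calc ‖P z‖ = ‖A z.fst‖ := by rw [hP, norm_toLp_fst]
      _ ≤ ‖A‖ * ‖z‖ := (A.le_opNorm _).trans (by gcongr; exact norm_fst_le _ z)
  · calc ‖A x‖ = ‖P (toLp p (x, 0))‖ := by rw [hP, norm_toLp_fst]; rfl
      _ ≤ ‖P‖ * ‖x‖ := by simpa using P.le_opNorm (toLp p (x, (0 : F)))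

end ProdLp

section BlockOperator

variable {𝕜 E F : Type*} [RCLike 𝕜] [NormedAddCommGroup E] [InnerProductSpace 𝕜 E] [CompleteSpace E]
  [NormedAddCommGroup F] [InnerProductSpace 𝕜 F] [CompleteSpace F]
  {S : F →L[𝕜] E} {T : WithLp 2 (E × F) →L[𝕜] WithLp 2 (E × F)}

theorem adjoint_apply_of_apply_eq_toLp_sub (hT : ∀ z, T z = toLp 2 (z.fst - S z.snd, 0))
    (z : WithLp 2 (E × F)) : adjoint T z = toLp 2 (z.fst, -(adjoint S z.fst)) := by
  refine ext_inner_right 𝕜 fun w => ?_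
  simp only [adjoint_inner_left, hT, prod_inner_apply, inner_sub_right, inner_zero_right,
    inner_neg_left, add_zero]
  exact sub_eq_add_neg _ _

theorem comp_adjoint_apply_of_apply_eq_toLp_sub (hT : ∀ z, T z = toLp 2 (z.fst - S z.snd, 0))
    (z : WithLp 2 (E × F)) : (T ∘L adjoint T) z = toLp 2 ((1 + S ∘L adjoint S) z.fst, 0) := by
  simp [adjoint_apply_of_apply_eq_toLp_sub hT, hT]

theorem norm_eq_sqrt_of_apply_eq_toLp_sub (hT : ∀ z, T z = toLp 2 (z.fst - S z.snd, 0)) :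
    ‖T‖ = √‖1 + S ∘L adjoint S‖ := by
  have hCStar : ‖T ∘L adjoint T‖ = ‖T‖ * ‖T‖ := by
    simpa using norm_adjoint_comp_self (adjoint T)
  rw [← opNorm_eq_of_apply_eq_toLp_inl (comp_adjoint_apply_of_apply_eq_toLp_sub hT), hCStar,
    Real.sqrt_mul_self (norm_nonneg T)]

end BlockOperator

section UnitSpectrum

open Complex Set

variable {A : Type*} [CStarAlgebra A]

theorem norm_inv_eq_inv_sInf_spectrum (u : Aˣ) (hu : IsSelfAdjoint (↑u⁻¹ : A))
    (hσ : spectrum ℂ (u : A) ⊆ ofReal '' Ioi 0) :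
    ‖(↑u⁻¹ : A)‖ = (sInf {r : ℝ | (r : ℂ) ∈ spectrum ℂ (u : A)})⁻¹ := by
  rcases subsingleton_or_nontrivial A with hA | hA
  -- here both sides are junk zeros: the spectrum is empty and `(sInf ∅)⁻¹ = 0⁻¹ = 0`
  · simp [Subsingleton.elim (↑u⁻¹ : A) 0, spectrum.of_subsingleton]
  set Λ := {r : ℝ | (r : ℂ) ∈ spectrum ℂ (u : A)}
  have hΛ_pos : ∀ r ∈ Λ, 0 < r := fun r hr => by
    obtain ⟨s, hs, hsr⟩ := hσ hr
    rwa [← ofReal_inj.mp hsr]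
  have hΛ_bdd : BddBelow Λ := ⟨0, fun r hr => (hΛ_pos r hr).le⟩
  have hΛ_min : sInf Λ ∈ Λ := by
    refine ((spectrum.isClosed (u : A)).preimage continuous_ofReal).csInf_mem ?_ hΛ_bdd
    obtain ⟨k, hk⟩ := spectrum.nonempty (u : A)
    obtain ⟨r, -, rfl⟩ := hσ hk
    exact ⟨r, hk⟩
  have hΛ_inf_pos := hΛ_pos _ hΛ_min
  have mem_inv_iff {k : ℂ} : k ∈ spectrum ℂ (↑u⁻¹ : A) ↔ k⁻¹ ∈ spectrum ℂ (u : A) := by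
    rw [← spectrum.map_inv, Set.mem_inv]
  refine le_antisymm ?_ ?_
  · obtain ⟨k, hk, hk_norm⟩ :=
      spectrum.exists_nnnorm_eq_spectralRadius_of_nonempty (spectrum.nonempty (↑u⁻¹ : A))
    rw [hu.spectralRadius_eq_nnnorm, ENNReal.coe_inj] at hk_norm
    obtain ⟨r, hr, hrk⟩ := hσ (mem_inv_iff.mp hk)
    have hrΛ : r ∈ Λ := show (r : ℂ) ∈ _ from hrk ▸ mem_inv_iff.mp hk
    calc ‖(↑u⁻¹ : A)‖ = ‖k‖ := congrArg NNReal.toReal hk_norm.symm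
      _ = r⁻¹ := by rw [← inv_inv k, ← hrk, norm_inv, norm_real, Real.norm_of_nonneg hr.out.le]
      _ ≤ (sInf Λ)⁻¹ := inv_anti₀ hΛ_inf_pos (csInf_le hΛ_bdd hrΛ)
  · have hk : ((sInf Λ : ℝ) : ℂ)⁻¹ ∈ spectrum ℂ (↑u⁻¹ : A) := mem_inv_iff.mpr (by rwa [inv_inv])
    simpa [abs_of_pos hΛ_inf_pos] using spectrum.norm_le_norm_of_mem hk

end UnitSpectrum

theorem block_skew_projection_norm_general
    {M : Type*} [NormedAddCommGroup M] [InnerProductSpace ℂ M] [CompleteSpace M]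
    (H : M →L[ℂ] M)
    (hσ : spectrum ℂ H ⊆ (fun r : ℝ => (r : ℂ)) '' Set.Ioc 0 1)
    (Hinv : M →L[ℂ] M) (hHinv : H * Hinv = 1 ∧ Hinv * H = 1)
    (S : M →L[ℂ] M) (hS : S.IsPositive) (hS2 : S * S = Hinv - 1)
    (T : WithLp 2 (M × M) →L[ℂ] WithLp 2 (M × M))
    (hT : ∀ z : WithLp 2 (M × M),
      T z = (WithLp.equiv 2 (M × M)).symm
        ((WithLp.equiv 2 (M × M) z).1 - S ((WithLp.equiv 2 (M × M) z).2), 0)) :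
    ‖T‖ = Real.sqrt (1 / sInf {r : ℝ | (r : ℂ) ∈ spectrum ℂ H}) ∧
      ‖T‖ = Real.sqrt ‖Hinv‖ := by
  have hHinv_eq : Hinv = 1 + S * star S := by
    rw [hS.isSelfAdjoint.star_eq, hS2, add_sub_cancel]
  have hT_norm : ‖T‖ = √‖Hinv‖ := by
    rw [norm_eq_sqrt_of_apply_eq_toLp_sub hT, hHinv_eq]
    rfl
  let u : (M →L[ℂ] M)ˣ := ⟨H, Hinv, hHinv.1, hHinv.2⟩
  have hu : IsSelfAdjoint (↑u⁻¹ : M →L[ℂ] M) := by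
    rw [show (↑u⁻¹ : M →L[ℂ] M) = Hinv from rfl, hHinv_eq]
    exact .add (.one _) (.mul_star_self S)
  refine ⟨?_, hT_norm⟩
  rw [hT_norm, one_div]
  exact congrArg Real.sqrt
    (norm_inv_eq_inv_sInf_spectrum u hu (hσ.trans (Set.image_mono Set.Ioc_subset_Ioi_self)))

/-- For the block operator `T = [[I, −√(H⁻¹ − I)],[0,0]]` on `M ⊕ M` (ℓ² direct sum),
where `H` is self-adjoint with `σ(H) ⊆ (0,1]`, one has
`‖T‖ = √(1 / min σ(H)) = ‖H⁻¹‖^(1/2)`. -/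
theorem block_skew_projection_norm
    {M : Type*} [NormedAddCommGroup M] [InnerProductSpace ℂ M] [CompleteSpace M]
    (H : M →L[ℂ] M) (hH : IsSelfAdjoint H)
    (hσ : spectrum ℂ H ⊆ (fun r : ℝ => (r : ℂ)) '' Set.Ioc 0 1)
    (Hinv : M →L[ℂ] M) (hHinv : H * Hinv = 1 ∧ Hinv * H = 1)
    (S : M →L[ℂ] M) (hS : S.IsPositive) (hS2 : S * S = Hinv - 1)
    (T : WithLp 2 (M × M) →L[ℂ] WithLp 2 (M × M))
    (hT : ∀ z : WithLp 2 (M × M),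
      T z = (WithLp.equiv 2 (M × M)).symm
        ((WithLp.equiv 2 (M × M) z).1 - S ((WithLp.equiv 2 (M × M) z).2), 0)) :
    ‖T‖ = Real.sqrt (1 / sInf {r : ℝ | (r : ℂ) ∈ spectrum ℂ H}) ∧
      ‖T‖ = Real.sqrt ‖Hinv‖ :=
  block_skew_projection_norm_general H hσ Hinv hHinv S hS hS2 T hT
end

section
/- For a bounded operator T and k ≥ 1, (TT*)^k attains its norm if and only if TT* attains its norm if and only if T attains its norm. -/
/-!
If `T` attains its norm at a unit vector `x`, so does `T† T`, since
`‖T‖² = ‖T x‖² = re ⟪T† T x, x⟫ ≤ ‖T† T x‖ ≤ ‖T† T‖ = ‖T‖²`; conversely `‖T‖² = ‖T† (T x)‖ ≤ ‖T‖ ‖T x‖`.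
The same computation shows that `T†` attains its norm in the direction `T x`, so `T T† = T†† T†`
attains its norm iff `T` does. For self-adjoint `S` one has `‖S ^ n‖ = ‖S‖ ^ n`, so if `S ^ (n + 1)`
attains its norm at `x` then so does `S ^ n`; and since `S ^ 2 ^ (m + 1) = (S ^ 2 ^ m)† S ^ 2 ^ m`,
norm attainment of `S` at `x` passes to every `S ^ 2 ^ m`, hence down to every `S ^ k`.
-/

open ContinuousLinearMap
open scoped InnerProduct

theorem IsSelfAdjoint.norm_pow {E : Type*} [NormedRing E] [StarRing E] [CStarRing E] {a : E}
    (ha : IsSelfAdjoint a) {n : ℕ} (hn : n ≠ 0) : ‖a ^ n‖ = ‖a‖ ^ n := by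
  rcases eq_or_ne a 0 with rfl | ha0
  · simp [zero_pow hn]
  have hlt : n < 2 ^ n := n.lt_two_pow_self
  have hsplit : n + (2 ^ n - n) = 2 ^ n := by omega
  refine le_antisymm (norm_pow_le' a (Nat.pos_of_ne_zero hn)) (le_of_mul_le_mul_right ?_
    (pow_pos (norm_pos_iff.mpr ha0) (2 ^ n - n)))
  calc ‖a‖ ^ n * ‖a‖ ^ (2 ^ n - n) = ‖a ^ n * a ^ (2 ^ n - n)‖ := by
        rw [← pow_add, ← pow_add, hsplit, ha.norm_pow_two_pow]
    _ ≤ ‖a ^ n‖ * ‖a‖ ^ (2 ^ n - n) := by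
        refine (norm_mul_le _ _).trans (mul_le_mul_of_nonneg_left ?_ (norm_nonneg _))
        exact norm_pow_le' a (by omega)

namespace ContinuousLinearMap

section Normed

variable {𝕜 E F G : Type*} [NontriviallyNormedField 𝕜] [NormedAddCommGroup E]
  [NormedAddCommGroup F] [NormedAddCommGroup G] [NormedSpace 𝕜 E] [NormedSpace 𝕜 F]
  [NormedSpace 𝕜 G]

def NormAttained (A : E →L[𝕜] F) : Prop :=
  ∃ x : E, ‖x‖ = 1 ∧ ‖A x‖ = ‖A‖

theorem norm_apply_eq_of_norm_apply_apply_eq {A : F →L[𝕜] G} {B : E →L[𝕜] F} (hA : A ≠ 0)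
    {x : E} (hx : ‖x‖ = 1) (h : ‖A (B x)‖ = ‖A‖ * ‖B‖) : ‖B x‖ = ‖B‖ := by
  refine le_antisymm (by simpa [hx] using B.le_opNorm x) (le_of_mul_le_mul_left ?_
    (norm_pos_iff.mpr hA))
  exact h ▸ A.le_opNorm (B x)

end Normed

section RCLike

variable {𝕜 E F : Type*} [RCLike 𝕜] [NormedAddCommGroup E] [NormedAddCommGroup F]
  [NormedSpace 𝕜 E] [NormedSpace 𝕜 F]

theorem normAttained_of_norm_apply_eq {A : E →L[𝕜] F} {y : E} (hy : y ≠ 0)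
    (h : ‖A y‖ = ‖A‖ * ‖y‖) : A.NormAttained := by
  refine ⟨(‖y‖⁻¹ : 𝕜) • y, norm_smul_inv_norm hy, ?_⟩
  rw [map_smul, norm_smul, h, norm_inv, RCLike.norm_ofReal, abs_norm,
    mul_comm, mul_assoc, mul_inv_cancel₀ (norm_ne_zero_iff.mpr hy), mul_one]

end RCLike

section Hilbert

variable {𝕜 E F : Type*} [RCLike 𝕜] [NormedAddCommGroup E] [NormedAddCommGroup F]
  [InnerProductSpace 𝕜 E] [InnerProductSpace 𝕜 F] [CompleteSpace E] [CompleteSpace F]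

theorem norm_adjoint_comp_self_apply_eq_iff (T : E →L[𝕜] F) {x : E} (hx : ‖x‖ = 1) :
    ‖(T† ∘L T) x‖ = ‖T† ∘L T‖ ↔ ‖T x‖ = ‖T‖ := by
  rcases eq_or_ne T 0 with rfl | hT
  · simp
  constructor
  · intro h
    refine norm_apply_eq_of_norm_apply_apply_eq (A := T†) ?_ hx ?_
    · simpa using hT
    · rwa [adjoint.norm_map, ← norm_adjoint_comp_self]
  · intro h
    refine le_antisymm (by simpa [hx] using (T† ∘L T).le_opNorm x) ?_
    calc ‖T† ∘L T‖ = ‖T x‖ ^ 2 := by rw [norm_adjoint_comp_self, h, sq]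
      _ = RCLike.re (inner 𝕜 ((T† ∘L T) x) x) := apply_norm_sq_eq_inner_adjoint_left T x
      _ ≤ ‖(T† ∘L T) x‖ := by simpa [hx] using re_inner_le_norm ((T† ∘L T) x) x

theorem normAttained_adjoint_comp_self_iff (T : E →L[𝕜] F) :
    (T† ∘L T).NormAttained ↔ T.NormAttained :=
  exists_congr fun _ => and_congr_right fun hx => norm_adjoint_comp_self_apply_eq_iff T hx

theorem NormAttained.adjoint {T : E →L[𝕜] E} (h : T.NormAttained) : T†.NormAttained := by
  obtain ⟨x, hx, hTx⟩ := h
  rcases eq_or_ne (T x) 0 with hTx0 | hTx0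
  · have hT : T = 0 := norm_eq_zero.mp (hTx ▸ norm_eq_zero.mpr hTx0)
    exact ⟨x, hx, by simp [hT]⟩
  refine normAttained_of_norm_apply_eq hTx0 ?_
  have := (norm_adjoint_comp_self_apply_eq_iff T hx).mpr hTx
  rwa [LinearIsometryEquiv.norm_map, hTx, ← norm_adjoint_comp_self]

theorem normAttained_adjoint_iff (T : E →L[𝕜] E) : T†.NormAttained ↔ T.NormAttained :=
  ⟨fun h => adjoint_adjoint T ▸ h.adjoint, NormAttained.adjoint⟩

end Hilbert

end ContinuousLinearMap

namespace IsSelfAdjoint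

variable {𝕜 E : Type*} [RCLike 𝕜] [NormedAddCommGroup E] [InnerProductSpace 𝕜 E]
  [CompleteSpace E] {S : E →L[𝕜] E}

theorem norm_pow_apply_eq_of_pow_succ (hS : IsSelfAdjoint S) {x : E} (hx : ‖x‖ = 1) {n : ℕ}
    (hn : n ≠ 0) (h : ‖(S ^ (n + 1)) x‖ = ‖S ^ (n + 1)‖) : ‖(S ^ n) x‖ = ‖S ^ n‖ := by
  rcases eq_or_ne S 0 with rfl | hS0
  · simp [zero_pow hn]
  refine norm_apply_eq_of_norm_apply_apply_eq hS0 hx ?_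
  calc ‖S ((S ^ n) x)‖ = ‖S ^ (n + 1)‖ := by rw [← h, pow_succ']; rfl
    _ = ‖S‖ * ‖S ^ n‖ := by rw [hS.norm_pow n.succ_ne_zero, hS.norm_pow hn, pow_succ']

theorem norm_pow_apply_eq_of_le (hS : IsSelfAdjoint S) {x : E} (hx : ‖x‖ = 1) {n m : ℕ}
    (hn : n ≠ 0) (hnm : n ≤ m) (h : ‖(S ^ m) x‖ = ‖S ^ m‖) : ‖(S ^ n) x‖ = ‖S ^ n‖ := by
  induction m, hnm using Nat.le_induction with
  | base => exact h
  | succ m hnm ih => exact ih (hS.norm_pow_apply_eq_of_pow_succ hx (by omega) h)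

theorem norm_pow_two_pow_apply_eq (hS : IsSelfAdjoint S) {x : E} (hx : ‖x‖ = 1)
    (h : ‖S x‖ = ‖S‖) (m : ℕ) : ‖(S ^ 2 ^ m) x‖ = ‖S ^ 2 ^ m‖ := by
  induction m with
  | zero => simpa using h
  | succ m ih =>
    have hsq : S ^ 2 ^ (m + 1) = (S ^ 2 ^ m)† ∘L S ^ 2 ^ m := by
      rw [(hS.pow _).adjoint_eq, ← mul_def, ← pow_add, ← two_mul, pow_succ']
    rw [hsq]
    exact (norm_adjoint_comp_self_apply_eq_iff _ hx).mpr ih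

theorem normAttained_pow_iff (hS : IsSelfAdjoint S) {k : ℕ} (hk : k ≠ 0) :
    (S ^ k).NormAttained ↔ S.NormAttained := by
  constructor
  · rintro ⟨x, hx, h⟩
    have := hS.norm_pow_apply_eq_of_le hx one_ne_zero (Nat.one_le_iff_ne_zero.mpr hk) h
    exact ⟨x, hx, by rwa [pow_one] at this⟩
  · rintro ⟨x, hx, h⟩
    exact ⟨x, hx, hS.norm_pow_apply_eq_of_le hx hk k.lt_two_pow_self.le
      (hS.norm_pow_two_pow_apply_eq hx h k)⟩

end IsSelfAdjoint

/-- For a bounded operator `T` on a complex Hilbert space and `k ≥ 1`, `(T T*)^k` attains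
its norm if and only if `T T*` attains its norm, if and only if `T` attains its norm. -/
theorem pow_self_comp_adjoint_normAttain_iff
    {H : Type*} [NormedAddCommGroup H] [InnerProductSpace ℂ H] [CompleteSpace H]
    (T : H →L[ℂ] H) (k : ℕ) (hk : 1 ≤ k) :
    ((∃ x : H, ‖x‖ = 1 ∧
        ‖((T * ContinuousLinearMap.adjoint T) ^ k) x‖ =
          ‖(T * ContinuousLinearMap.adjoint T) ^ k‖) ↔
      (∃ x : H, ‖x‖ = 1 ∧
        ‖(T * ContinuousLinearMap.adjoint T) x‖ = ‖T * ContinuousLinearMap.adjoint T‖)) ∧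
    ((∃ x : H, ‖x‖ = 1 ∧
        ‖(T * ContinuousLinearMap.adjoint T) x‖ = ‖T * ContinuousLinearMap.adjoint T‖) ↔
      (∃ x : H, ‖x‖ = 1 ∧ ‖T x‖ = ‖T‖)) := by
  have hS : IsSelfAdjoint (T * T†) := by
    simpa [star_eq_adjoint] using IsSelfAdjoint.mul_star_self T
  have hTT : T * T† = T†† ∘L T† := by rw [adjoint_adjoint]; rfl
  refine ⟨hS.normAttained_pow_iff (by omega), ?_⟩
  change (T * T†).NormAttained ↔ T.NormAttained
  rw [hTT, normAttained_adjoint_comp_self_iff, normAttained_adjoint_iff]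
end

section
/- Let (ωₙ) be a sequence of positive reals decreasing monotonically to 0, and let T be the block-diagonal operator on ℓ²(ℕ) built from the 2×2 blocks [[1, −ωₙ],[0,0]]. Then T is idempotent and attains its norm, with ‖T‖ = sqrt(1 + ω₁²). -/
/-!
The first row of the `n`-th block is `v ↦ ⟪(1, -ωₙ), v⟫`, so by Cauchy–Schwarz each block has
norm `√(1 + ωₙ²) ≤ √(1 + ω₀²)`, and the bound is attained by `(1, -ω₀)` placed in block `0`.
-/

open scoped InnerProductSpace

theorem lp.norm_le_mul_of_forall_norm_apply_le {ι : Type*} {E : ι → Type*}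
    [∀ i, NormedAddCommGroup (E i)] [∀ i, NormedSpace ℝ (E i)] {p : ENNReal} [Fact (1 ≤ p)]
    {x y : lp E p} {C : ℝ} (hC : 0 ≤ C) (h : ∀ i, ‖x i‖ ≤ C * ‖y i‖) : ‖x‖ ≤ C * ‖y‖ := by
  have hp : p ≠ 0 := (zero_lt_one.trans_le Fact.out).ne'
  calc ‖x‖ ≤ ‖C • y‖ := lp.norm_mono hp fun i => by
        rw [lp.coeFn_smul, Pi.smul_apply, norm_smul, Real.norm_of_nonneg hC]
        exact h i
    _ = C * ‖y‖ := by rw [norm_smul, Real.norm_of_nonneg hC]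

section OpNorm

variable {𝕜 E F : Type*} [RCLike 𝕜] [NormedAddCommGroup E] [NormedSpace 𝕜 E]
  [NormedAddCommGroup F] [NormedSpace 𝕜 F]

theorem ContinuousLinearMap.opNorm_eq_of_bound_of_le_apply (T : E →L[𝕜] F) {C : ℝ}
    (hC : 0 ≤ C) (hle : ∀ x, ‖T x‖ ≤ C * ‖x‖) {x : E} (hx : x ≠ 0) (hge : C * ‖x‖ ≤ ‖T x‖) :
    ‖T‖ = C :=
  (T.opNorm_le_bound hC hle).antisymm <|
    le_of_mul_le_mul_right (hge.trans (T.le_opNorm x)) (norm_pos_iff.mpr hx)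

theorem ContinuousLinearMap.exists_norm_eq_one_of_norm_apply_eq (T : E →L[𝕜] F) {x : E}
    (hx : x ≠ 0) (h : ‖T x‖ = ‖T‖ * ‖x‖) : ∃ u, ‖u‖ = 1 ∧ ‖T u‖ = ‖T‖ := by
  have hx' : ‖x‖ ≠ 0 := norm_ne_zero_iff.mpr hx
  refine ⟨((‖x‖⁻¹ : ℝ) : 𝕜) • x, ?_, ?_⟩
  · rw [norm_smul, RCLike.norm_ofReal, abs_inv, abs_norm, inv_mul_cancel₀ hx']
  · rw [map_smul, norm_smul, RCLike.norm_ofReal, abs_inv, abs_norm, h, mul_comm, mul_assoc,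
      mul_inv_cancel₀ hx', mul_one]

end OpNorm

section SkewRow

variable {𝕜 : Type*} [RCLike 𝕜]

def skewRow (w : ℝ) : EuclideanSpace 𝕜 (Fin 2) := !₂[1, -(w : 𝕜)]

theorem inner_skewRow (w : ℝ) (v : EuclideanSpace 𝕜 (Fin 2)) :
    ⟪skewRow w, v⟫_𝕜 = v 0 - w * v 1 := by
  simp [skewRow, PiLp.inner_apply, Fin.sum_univ_two, sub_eq_add_neg, mul_comm]

theorem norm_skewRow (w : ℝ) : ‖(skewRow w : EuclideanSpace 𝕜 (Fin 2))‖ = √(1 + w ^ 2) := by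
  simp [skewRow, EuclideanSpace.norm_eq, Fin.sum_univ_two]

theorem norm_inner_skewRow_le {w w' : ℝ} (hw : 0 ≤ w) (hww' : w ≤ w')
    (v : EuclideanSpace 𝕜 (Fin 2)) : ‖⟪skewRow w, v⟫_𝕜‖ ≤ √(1 + w' ^ 2) * ‖v‖ :=
  (norm_inner_le_norm _ _).trans <| by rw [norm_skewRow]; gcongr

theorem EuclideanSpace.norm_eq_norm_zero_of_one_eq_zero {v : EuclideanSpace 𝕜 (Fin 2)}
    (hv : v 1 = 0) : ‖v‖ = ‖v 0‖ := by
  simp [EuclideanSpace.norm_eq, Fin.sum_univ_two, hv]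

end SkewRow

theorem blockDiag_skew_projection_normAttain_general
    (ω : ℕ → ℝ) (hpos : ∀ n, 0 < ω n) (hanti : StrictAnti ω)
    (T : lp (fun _ : ℕ => EuclideanSpace ℂ (Fin 2)) 2 →L[ℂ]
          lp (fun _ : ℕ => EuclideanSpace ℂ (Fin 2)) 2)
    (hT : ∀ (x : lp (fun _ : ℕ => EuclideanSpace ℂ (Fin 2)) 2) (n : ℕ),
      (T x) n 0 = x n 0 - (ω n : ℂ) * x n 1 ∧ (T x) n 1 = 0) :
    IsIdempotentElem T ∧ (∃ x, ‖x‖ = 1 ∧ ‖T x‖ = ‖T‖) ∧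
      ‖T‖ = Real.sqrt (1 + ω 0 ^ 2) := by
  have hidem : IsIdempotentElem T := by
    ext x n i
    fin_cases i
    · simp [(hT (T x) n).1, (hT x n).2]
    · simp [(hT (T x) n).2, (hT x n).2]
  have hblock : ∀ x n, ‖T x n‖ = ‖⟪skewRow (ω n), x n⟫_ℂ‖ := fun x n => by
    rw [EuclideanSpace.norm_eq_norm_zero_of_one_eq_zero (hT x n).2, (hT x n).1, inner_skewRow]
    rfl
  set s := √(1 + ω 0 ^ 2)
  have hle : ∀ x, ‖T x‖ ≤ s * ‖x‖ := fun x =>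
    lp.norm_le_mul_of_forall_norm_apply_le (Real.sqrt_nonneg _) fun n =>
      hblock x n ▸ norm_inner_skewRow_le (hpos n).le (hanti.antitone n.zero_le) (x n)
  set x₀ : lp (fun _ : ℕ => EuclideanSpace ℂ (Fin 2)) 2 := lp.single 2 0 (skewRow (ω 0))
  have hx₀ : ‖x₀‖ = s := by rw [lp.norm_single two_pos, norm_skewRow]
  have hge : s * ‖x₀‖ ≤ ‖T x₀‖ :=
    calc s * ‖x₀‖ = ‖⟪skewRow (ω 0), x₀ 0⟫_ℂ‖ := by
          rw [lp.single_apply_self, inner_self_eq_norm_sq_to_K, norm_pow, RCLike.norm_ofReal,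
            abs_norm, norm_skewRow, hx₀, sq]
      _ = ‖T x₀ 0‖ := (hblock x₀ 0).symm
      _ ≤ ‖T x₀‖ := lp.norm_apply_le_norm two_ne_zero _ _
  have hx₀_ne : x₀ ≠ 0 := norm_pos_iff.mp (hx₀ ▸ by positivity)
  have hnorm : ‖T‖ = s := T.opNorm_eq_of_bound_of_le_apply (by positivity) hle hx₀_ne hge
  exact ⟨hidem, T.exists_norm_eq_one_of_norm_apply_eq hx₀_ne (hnorm ▸ (hle x₀).antisymm hge),
    hnorm⟩

/-- Let `(ωₙ)` be a sequence of positive reals decreasing monotonically to `0`, and let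
`T` be the block-diagonal operator on `ℓ² = ⊕ₙ ℂ²` built from the `2 × 2` blocks
`[[1, −ωₙ],[0,0]]`. Then `T` is idempotent and attains its norm, with
`‖T‖ = √(1 + ω₀²)` (the first block being indexed by `0`). -/
theorem blockDiag_skew_projection_normAttain
    (ω : ℕ → ℝ) (hpos : ∀ n, 0 < ω n) (hanti : StrictAnti ω)
    (hlim : Filter.Tendsto ω Filter.atTop (nhds 0))
    (T : lp (fun _ : ℕ => EuclideanSpace ℂ (Fin 2)) 2 →L[ℂ]
          lp (fun _ : ℕ => EuclideanSpace ℂ (Fin 2)) 2)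
    (hT : ∀ (x : lp (fun _ : ℕ => EuclideanSpace ℂ (Fin 2)) 2) (n : ℕ),
      (T x) n 0 = x n 0 - (ω n : ℂ) * x n 1 ∧ (T x) n 1 = 0) :
    IsIdempotentElem T ∧ (∃ x, ‖x‖ = 1 ∧ ‖T x‖ = ‖T‖) ∧
      ‖T‖ = Real.sqrt (1 + ω 0 ^ 2) :=
  blockDiag_skew_projection_normAttain_general ω hpos hanti T hT
end

section
/- Let T be the block-diagonal idempotent on ℓ² built from blocks [[1, −1/n],[0,0]], n ∈ ℕ, and A = TT* + T*T − T − T* − I. Then A does not attain its norm, and ‖A‖ = 1. -/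
/-!
Adjoints of block-diagonal operators on `ℓ²` are computed blockwise, so `A` acts on the `n`-th
copy of `ℂ²` by the image under the star-algebra isomorphism `Matrix.toEuclideanCLM` of
`MM* + M*M − M − M* − 1` with `M = [[1, −ωₙ], [0, 0]]`, which is the scalar `ωₙ² − 1`.
A diagonal multiplier by scalars of modulus `< 1` whose moduli tend to `1` has norm `1`, yet it
shrinks every nonzero vector strictly, so the norm is not attained.
-/

open ContinuousLinearMap Filter Topology
open scoped ENNReal InnerProductSpace

def buckholtz {R : Type*} [Ring R] [Star R] (t : R) : R :=
  t * star t + star t * t - t - star t - 1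

lemma map_buckholtz {R S F : Type*} [Ring R] [StarRing R] [Ring S] [StarRing S]
    [FunLike F R S] [RingHomClass F R S] [StarHomClass F R S] (f : F) (t : R) :
    f (buckholtz t) = buckholtz (f t) := by
  simp only [buckholtz, map_sub, map_add, map_mul, map_star, map_one]

lemma Matrix.buckholtz_idempotent_fin_two {R : Type*} [CommRing R] [StarRing R] {ω : R}
    (hω : star ω = ω) : buckholtz !![1, -ω; 0, 0] = (ω ^ 2 - 1) • 1 := by
  have hstar : star !![1, -ω; 0, 0] = !![1, 0; -ω, 0] := by
    ext i j; fin_cases i <;> fin_cases j <;> simp [hω]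
  rw [buckholtz, hstar, Matrix.mul_fin_two, Matrix.mul_fin_two, Matrix.one_fin_two]
  ext i j; fin_cases i <;> fin_cases j <;> simp <;> ring

lemma Complex.norm_ofReal_sq_sub_one {ω : ℝ} (h₀ : 0 ≤ ω) (h₁ : ω ≤ 1) :
    ‖(ω : ℂ) ^ 2 - 1‖ = 1 - ω ^ 2 := by
  have hsq : ω ^ 2 ≤ 1 := pow_le_one₀ h₀ h₁
  rw [← ofReal_pow, ← ofReal_one, ← ofReal_sub, norm_real, Real.norm_eq_abs,
    abs_of_nonpos (sub_nonpos.mpr hsq), neg_sub]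

namespace lp

section BlockDiagonal

variable {𝕜 ι : Type*} [RCLike 𝕜] {E : ι → Type*} [∀ i, NormedAddCommGroup (E i)]
  [∀ i, InnerProductSpace 𝕜 (E i)]

def IsBlockDiagonal (T : lp E 2 →L[𝕜] lp E 2) (B : ∀ i, E i →L[𝕜] E i) : Prop :=
  ∀ x i, T x i = B i (x i)

namespace IsBlockDiagonal

variable {S T : lp E 2 →L[𝕜] lp E 2} {B C : ∀ i, E i →L[𝕜] E i}

lemma one : IsBlockDiagonal (1 : lp E 2 →L[𝕜] lp E 2) 1 := fun _ _ => rfl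

lemma add (hS : IsBlockDiagonal S B) (hT : IsBlockDiagonal T C) :
    IsBlockDiagonal (S + T) (B + C) := fun x i => by
  simp [hS x i, hT x i]

lemma sub (hS : IsBlockDiagonal S B) (hT : IsBlockDiagonal T C) :
    IsBlockDiagonal (S - T) (B - C) := fun x i => by
  simp [hS x i, hT x i]

lemma mul (hS : IsBlockDiagonal S B) (hT : IsBlockDiagonal T C) :
    IsBlockDiagonal (S * T) (B * C) := fun x i => by
  simp [hS _ i, hT x i]

lemma apply_single [DecidableEq ι] (hT : IsBlockDiagonal T B) (i : ι) (v : E i) :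
    T (lp.single 2 i v) = lp.single 2 i (B i v) := by
  ext j
  rw [hT, lp.single_apply, lp.single_apply]
  by_cases h : j = i
  · subst h; simp
  · simp [Pi.single_eq_of_ne h]

lemma star [∀ i, CompleteSpace (E i)] (hT : IsBlockDiagonal T B) :
    IsBlockDiagonal (Star.star T) (Star.star B) := by
  classical
  intro y i
  refine ext_inner_right 𝕜 fun v => ?_
  calc ⟪(Star.star T) y i, v⟫_𝕜 = ⟪y, T (lp.single 2 i v)⟫_𝕜 := by
        rw [← lp.inner_single_right, star_eq_adjoint, adjoint_inner_left]
    _ = ⟪Star.star B i (y i), v⟫_𝕜 := by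
        rw [hT.apply_single, lp.inner_single_right, Pi.star_apply, star_eq_adjoint,
          adjoint_inner_left]

lemma buckholtz [∀ i, CompleteSpace (E i)] (hT : IsBlockDiagonal T B) :
    IsBlockDiagonal (_root_.buckholtz T) fun i => _root_.buckholtz (B i) :=
  ((((hT.mul hT.star).add (hT.star.mul hT)).sub hT).sub hT.star).sub one

end IsBlockDiagonal

end BlockDiagonal

section ScalarDiagonal

variable {𝕜 ι : Type*} [NontriviallyNormedField 𝕜] {E : ι → Type*} [∀ i, NormedAddCommGroup (E i)]
  {p : ℝ≥0∞}

lemma norm_lt_norm_of_forall_norm_apply_le {x y : lp E p} (hp : 0 < p.toReal)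
    (hle : ∀ i, ‖x i‖ ≤ ‖y i‖) {i : ι} (hlt : ‖x i‖ < ‖y i‖) : ‖x‖ < ‖y‖ := by
  have hrpow : ‖x‖ ^ p.toReal < ‖y‖ ^ p.toReal := by
    rw [norm_rpow_eq_tsum hp, norm_rpow_eq_tsum hp]
    exact Summable.tsum_lt_tsum (fun j => by gcongr; exact hle j) (by gcongr)
      ((lp.memℓp x).summable hp) ((lp.memℓp y).summable hp)
  exact (Real.rpow_lt_rpow_iff (norm_nonneg' x) (norm_nonneg' y) hp).mp hrpow

variable [∀ i, NormedSpace 𝕜 (E i)] [Fact (1 ≤ p)] {A : lp E p →L[𝕜] lp E p} {c : ι → 𝕜}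

lemma opNorm_le_one_of_apply_eq_smul (hA : ∀ x i, A x i = c i • x i) (hc : ∀ i, ‖c i‖ ≤ 1) :
    ‖A‖ ≤ 1 :=
  opNorm_le_bound A zero_le_one fun x => by
    rw [one_mul]
    refine norm_mono (zero_lt_one.trans_le Fact.out).ne' fun i => ?_
    rw [hA, norm_smul]
    exact mul_le_of_le_one_left (norm_nonneg _) (hc i)

lemma norm_apply_lt_of_apply_eq_smul (hp : p ≠ ∞) (hA : ∀ x i, A x i = c i • x i)
    (hc : ∀ i, ‖c i‖ < 1) {x : lp E p} (hx : x ≠ 0) : ‖A x‖ < ‖x‖ := by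
  obtain ⟨i, hi⟩ : ∃ i, x i ≠ 0 := by
    by_contra! h
    exact hx (lp.ext (funext h))
  have hp' : 0 < p.toReal := ENNReal.toReal_pos (zero_lt_one.trans_le Fact.out).ne' hp
  refine norm_lt_norm_of_forall_norm_apply_le hp' (fun j => ?_) (i := i) ?_
  · rw [hA, norm_smul]
    exact mul_le_of_le_one_left (norm_nonneg _) (hc j).le
  · rw [hA, norm_smul]
    exact mul_lt_of_lt_one_left (norm_pos_iff.mpr hi) (hc i)

lemma norm_le_opNorm_of_apply_eq_smul (hA : ∀ x i, A x i = c i • x i) (i : ι)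
    [Nontrivial (E i)] : ‖c i‖ ≤ ‖A‖ := by
  classical
  obtain ⟨v, hv⟩ := exists_ne (0 : E i)
  have hp : 0 < p := zero_lt_one.trans_le Fact.out
  refine le_of_mul_le_mul_right ?_ (norm_pos_iff.mpr hv)
  calc ‖c i‖ * ‖v‖ = ‖A (lp.single p i v) i‖ := by rw [hA, lp.single_apply_self, norm_smul]
    _ ≤ ‖A (lp.single p i v)‖ := norm_apply_le_norm hp.ne' _ i
    _ ≤ ‖A‖ * ‖v‖ := by simpa only [lp.norm_single hp] using A.le_opNorm (lp.single p i v)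

lemma opNorm_eq_one_of_apply_eq_smul {l : Filter ι} [l.NeBot] [∀ i, Nontrivial (E i)]
    (hA : ∀ x i, A x i = c i • x i) (hc : ∀ i, ‖c i‖ < 1)
    (hlim : Tendsto (fun i => ‖c i‖) l (𝓝 1)) : ‖A‖ = 1 :=
  le_antisymm (opNorm_le_one_of_apply_eq_smul hA fun i => (hc i).le)
    (le_of_tendsto' hlim fun i => norm_le_opNorm_of_apply_eq_smul hA i)

end ScalarDiagonal

end lp

open ContinuousLinearMap in
/-- Let `T` be the block-diagonal idempotent on `ℓ² = ⊕ₙ ℂ²` built from the blocks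
`[[1, −1/n],[0,0]]`, `n ≥ 1` (indexed here by `n : ℕ` with `ωₙ = 1/(n+1)`), and let
`A = TT* + T*T − T − T* − I`. Then `A` does not attain its norm, and `‖A‖ = 1`. -/
theorem blockDiag_one_over_n_buckholtz_not_normAttain
    (T : lp (fun _ : ℕ => EuclideanSpace ℂ (Fin 2)) 2 →L[ℂ]
          lp (fun _ : ℕ => EuclideanSpace ℂ (Fin 2)) 2)
    (hT : ∀ (x : lp (fun _ : ℕ => EuclideanSpace ℂ (Fin 2)) 2) (n : ℕ),
      (T x) n 0 = x n 0 - ((1 : ℂ) / (n + 1)) * x n 1 ∧ (T x) n 1 = 0)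
    (A : lp (fun _ : ℕ => EuclideanSpace ℂ (Fin 2)) 2 →L[ℂ]
          lp (fun _ : ℕ => EuclideanSpace ℂ (Fin 2)) 2)
    (hA : A = T * adjoint T + adjoint T * T - T - adjoint T - 1) :
    (¬ ∃ x, ‖x‖ = 1 ∧ ‖A x‖ = ‖A‖) ∧ ‖A‖ = 1 := by
  set ω : ℕ → ℝ := fun n => 1 / (n + 1)
  have hT_blocks : lp.IsBlockDiagonal T fun n =>
      Matrix.toEuclideanCLM (𝕜 := ℂ) (n := Fin 2) !![1, -(ω n : ℂ); 0, 0] := by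
    intro x n
    ext i
    fin_cases i <;> simp [hT, ω, sub_eq_add_neg, Matrix.vecHead, Matrix.vecTail]
  have hA_blocks : ∀ x n, A x n = ((ω n : ℂ) ^ 2 - 1) • x n := by
    intro x n
    have hA' : A = buckholtz T := by rw [hA, buckholtz, star_eq_adjoint]
    rw [hA', hT_blocks.buckholtz x n]
    dsimp only
    rw [← map_buckholtz, Matrix.buckholtz_idempotent_fin_two (Complex.conj_ofReal _), map_smul,
      map_one, smul_apply, one_apply_eq_self]
  have hω : Tendsto ω atTop (𝓝 0) := tendsto_one_div_add_atTop_nhds_zero_nat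
  have hc_norm : ∀ n, ‖(ω n : ℂ) ^ 2 - 1‖ = 1 - ω n ^ 2 := fun n =>
    Complex.norm_ofReal_sq_sub_one (by positivity) (div_le_one_of_le₀ (by simp) (by positivity))
  have hc_lt_one : ∀ n, ‖(ω n : ℂ) ^ 2 - 1‖ < 1 := fun n => by
    rw [hc_norm]
    exact sub_lt_self _ (by positivity)
  have hc_tendsto : Tendsto (fun n => ‖(ω n : ℂ) ^ 2 - 1‖) atTop (𝓝 1) := by
    simpa [hc_norm] using (hω.pow 2).const_sub 1
  have hnorm : ‖A‖ = 1 := lp.opNorm_eq_one_of_apply_eq_smul hA_blocks hc_lt_one hc_tendsto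
  refine ⟨fun ⟨x, hx, hAx⟩ => ?_, hnorm⟩
  have hlt := lp.norm_apply_lt_of_apply_eq_smul ENNReal.ofNat_ne_top hA_blocks hc_lt_one
    (x := x) (by rintro rfl; simp at hx)
  rw [hAx, hnorm, hx] at hlt
  exact lt_irrefl _ hlt
end
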